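/- arXiv:1605.05783 — 2 statements merged into one kernel-verified Lean document; each statement's English description precedes it below -/
import Mathlib

section
/- Let g_0,…,g_m ⊂ k[x_0,…,x_n] be nonzero forms of common degree d ≥ 1, with Newton dual set ĝ_0,…,ĝ_m (relative to the common directrix vector). Let p(x,y) ∈ k[x_0,…,x_n,y_0,…,y_m] be bihomogeneous. If p(x_0,…,x_n, g_0,…,g_m) = 0, then p(x̂_0,…,x̂_n, ĝ_0,…,ĝ_m) = 0, where x̂_i = ∏_{j≠i} x_j. In particular, any bihomogeneous element of the presentation ideal of the Rees algebra of (g_0,…,g_m) yields, after the substitution x ↦ x̂, an element vanishing on (x̂, ĝ). -/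
open MvPolynomial Finset

/-- Newton complementary dual of `g` relative to a given directrix vector `β`. -/
noncomputable def newtonDualWith {k : Type*} [CommSemiring k] {N : ℕ}
    (β : Fin N → ℕ) (g : MvPolynomial (Fin N) k) : MvPolynomial (Fin N) k :=
  ∑ a ∈ g.support,
    monomial (Finsupp.equivFunOnFinite.symm fun i => β i - a i) (coeff a g)

/-- Newton complementary dual of a single form: directrix vector `β i = degreeOf i g`. -/
noncomputable def newtonDual {k : Type*} [CommSemiring k] {N : ℕ}
    (g : MvPolynomial (Fin N) k) : MvPolynomial (Fin N) k :=
  newtonDualWith (fun i => g.degreeOf i) g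

/-- The `i`-th coordinate of the Magnus reciprocal involution: `∏_{j ≠ i} x_j`. -/
noncomputable def magnus (k : Type*) [CommSemiring k] (N : ℕ) (i : Fin N) :
    MvPolynomial (Fin N) k :=
  ∏ j ∈ Finset.univ.erase i, X j

/-! Applying `x ↦ x̂` to a form `g` of degree `d` sends each monomial `x^a` to `x^{d𝟙 - a}`, which
factors as `x^{d𝟙 - β} · x^{β - a}`; hence `g(x̂) = x^{d𝟙 - β} · ĝ`. Substituting `x ↦ x̂` in the
relation `p(x, g) = 0` therefore gives `p(x̂, x^{d𝟙 - β} · ĝ) = 0`, and since `p` is homogeneous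
in `y` the common monomial factors out as `(x^{d𝟙 - β})^{d_y}`, which is a nonzerodivisor. -/

section NewtonDual

variable {k : Type*} [CommSemiring k] {N : ℕ}

lemma prod_magnus_pow (a : Fin N →₀ ℕ) :
    ∏ i, magnus k N i ^ a i
      = monomial (Finsupp.equivFunOnFinite.symm fun ℓ => (∑ i, a i) - a ℓ) (1 : k) := by
  have hcol : ∀ j : Fin N, ∏ i ∈ univ.erase j, (X j : MvPolynomial (Fin N) k) ^ a i
      = X j ^ ((∑ i, a i) - a j) := fun j => by
    rw [prod_pow_eq_pow_sum, ← add_sum_erase univ a (mem_univ j), Nat.add_sub_cancel_left]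
  simp only [magnus, ← prod_pow]
  rw [prod_comm' (t' := univ) (s' := fun j => univ.erase j) (by simp [eq_comm, and_comm]),
    prod_congr rfl fun j _ => hcol j, monomial_eq, C_1, one_mul, Finsupp.prod_fintype _ _ (by simp)]
  simp

lemma aeval_magnus_eq_monomial_mul_newtonDualWith {d : ℕ} {g : MvPolynomial (Fin N) k}
    (hg : g.IsHomogeneous d) {β : Fin N → ℕ} (hgβ : ∀ i, g.degreeOf i ≤ β i)
    (hβd : ∀ i, β i ≤ d) :
    aeval (magnus k N) g
      = monomial (Finsupp.equivFunOnFinite.symm fun i => d - β i) 1 * newtonDualWith β g := by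
  conv_lhs => rw [g.as_sum]
  rw [map_sum, newtonDualWith, mul_sum]
  refine sum_congr rfl fun a ha => ?_
  have hsum : ∑ i, a i = d := by
    simpa [Finsupp.weight_apply, Finsupp.sum_fintype] using hg (mem_support_iff.mp ha)
  have haβ : ∀ i, a i ≤ β i := fun i =>
    (monomial_le_degreeOf i ha).trans (hgβ i)
  have hexp : (Finsupp.equivFunOnFinite.symm fun ℓ => (∑ i, a i) - a ℓ)
      = (Finsupp.equivFunOnFinite.symm fun i => d - β i)
        + Finsupp.equivFunOnFinite.symm fun i => β i - a i := by
    ext ℓ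
    simp only [Finsupp.coe_add, Pi.add_apply, Finsupp.coe_equivFunOnFinite_symm, hsum]
    have := haβ ℓ
    have := hβd ℓ
    omega
  rw [aeval_monomial, Finsupp.prod_pow, prod_magnus_pow, algebraMap_eq, C_mul_monomial,
    monomial_mul, mul_one, one_mul, hexp]

end NewtonDual

lemma aeval_sumElim_mul_inr {R S σ τ : Type*} [CommSemiring R] [CommSemiring S] [Algebra R S]
    [Fintype σ] [Fintype τ] {dy : ℕ} {p : MvPolynomial (σ ⊕ τ) R}
    (hp : ∀ a ∈ p.support, ∑ j, a (Sum.inr j) = dy) (f : σ → S) (h : τ → S) (c : S) :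
    aeval (Sum.elim f fun j => c * h j) p = c ^ dy * aeval (Sum.elim f h) p := by
  conv_lhs => rw [p.as_sum]
  conv_rhs => rw [p.as_sum]
  rw [map_sum, map_sum, mul_sum]
  refine sum_congr rfl fun a ha => ?_
  simp only [aeval_monomial, Finsupp.prod_pow, Fintype.prod_sum_type, Sum.elim_inl, Sum.elim_inr,
    mul_pow, prod_mul_distrib, prod_pow_eq_pow_sum, hp a ha]
  ring

theorem rees_relation_dual_general {k : Type*} [Field k] {n m d dx dy : ℕ}
    (g : Fin (m + 1) → MvPolynomial (Fin (n + 1)) k)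
    (hhom : ∀ j, (g j).IsHomogeneous d)
    (β : Fin (n + 1) → ℕ)
    (hβ : ∀ i, β i = Finset.univ.sup fun j => (g j).degreeOf i)
    (p : MvPolynomial (Fin (n + 1) ⊕ Fin (m + 1)) k)
    (hbihom : ∀ a ∈ p.support,
      (∑ i, a (Sum.inl i)) = dx ∧ (∑ j, a (Sum.inr j)) = dy)
    (hvanish : aeval (Sum.elim (fun i => (X i : MvPolynomial (Fin (n + 1)) k)) g) p = 0) :
    aeval (Sum.elim (magnus k (n + 1)) (fun j => newtonDualWith β (g j))) p = 0 := by
  set M : MvPolynomial (Fin (n + 1)) k :=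
    monomial (Finsupp.equivFunOnFinite.symm fun i => d - β i) 1
  have hβd : ∀ i, β i ≤ d := fun i => (hβ i).trans_le <| Finset.sup_le fun j _ =>
    (degreeOf_le_totalDegree _ i).trans (hhom j).totalDegree_le
  have hdual : ∀ j, aeval (magnus k (n + 1)) (g j) = M * newtonDualWith β (g j) := fun j =>
    aeval_magnus_eq_monomial_mul_newtonDualWith (hhom j)
      (fun i => (hβ i).symm ▸ le_sup (f := fun j => degreeOf i (g j)) (mem_univ j)) hβd
  have hsubst : M ^ dy * aeval (Sum.elim (magnus k (n + 1)) (fun j => newtonDualWith β (g j))) p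
      = 0 := by
    have := congrArg (aeval (magnus k (n + 1))) hvanish
    rw [comp_aeval_apply, map_zero] at this
    rw [← aeval_sumElim_mul_inr (fun a ha => (hbihom a ha).2), ← funext hdual, ← this]
    congr 1
    ext (i | j) <;> simp
  exact (mul_eq_zero.mp hsubst).resolve_left (pow_ne_zero _ (by simp [M, monomial_eq_zero]))

theorem rees_relation_dual {k : Type*} [Field k] {n m d dx dy : ℕ}
    (hn : 1 ≤ n) (hd : 1 ≤ d)
    (g : Fin (m + 1) → MvPolynomial (Fin (n + 1)) k)
    (hne : ∀ j, g j ≠ 0) (hhom : ∀ j, (g j).IsHomogeneous d)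
    (β : Fin (n + 1) → ℕ)
    (hβ : ∀ i, β i = Finset.univ.sup fun j => (g j).degreeOf i)
    (p : MvPolynomial (Fin (n + 1) ⊕ Fin (m + 1)) k)
    (hbihom : ∀ a ∈ p.support,
      (∑ i, a (Sum.inl i)) = dx ∧ (∑ j, a (Sum.inr j)) = dy)
    (hvanish : aeval (Sum.elim (fun i => (X i : MvPolynomial (Fin (n + 1)) k)) g) p = 0) :
    aeval (Sum.elim (magnus k (n + 1)) (fun j => newtonDualWith β (g j))) p = 0 :=
  rees_relation_dual_general g hhom β hβ p hbihom hvanish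
end

section
/- Let g_0,…,g_m ⊂ k[x_0,…,x_n] be forms of degree d ≥ 1 and let h_0,…,h_n ⊂ k[x_0,…,x_n] be n+1 forms of a common degree s ≥ 1, with n ≥ 1. Let α be the directrix vector of the set {h_0,…,h_n}, let ĥ denote its Newton dual set, and let β be the directrix vector of the composed set {g_0(h),…,g_m(h)} (each of degree ds). Then for every j, g_j(ĥ_0,…,ĥ_n) · x_0^{dα_0 − β_0} ⋯ x_n^{dα_n − β_n} is a well-defined identity in the Laurent polynomial ring: x^{ds𝟙 − dα} · g_j(ĥ) = x^{ds𝟙 − β} · (g(h))^_j, i.e., g_j(ĥ) = x^{dα−β} · (g(h))^_j whenever dα_i ≥ β_i for all i. -/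
open MvPolynomial Finset

/-!
Substituting the Magnus coordinates `x̂ᵢ = ∏_{ℓ ≠ i} x_ℓ` into a form `f` of degree `e` gives
`x̂^a = x^(e𝟙 - a)` on each monomial, hence `f(x̂) = x^(e𝟙 - α) · f̂` for any directrix `α`
of `f` bounded by `e`. Apply this to every `h_ℓ` and to every `g_j(h)`, and compare the two sides
of `g_j(h)(x̂) = g_j(h(x̂))`: homogeneity of `g_j` pulls the common factor `x^(s𝟙 - α)` of the
`h_ℓ(x̂)` out as its `d`-th power.
-/

theorem MvPolynomial.aeval_mul_of_isHomogeneous {σ R S : Type*} [CommSemiring R] [CommSemiring S]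
    [Algebra R S] {g : MvPolynomial σ R} {d : ℕ} (hg : g.IsHomogeneous d) (P : S) (y : σ → S) :
    aeval (fun i => P * y i) g = P ^ d * aeval y g := by
  conv_lhs => rw [← g.support_sum_monomial_coeff]
  conv_rhs => rw [← g.support_sum_monomial_coeff]
  simp only [map_sum, mul_sum, aeval_monomial, mul_pow, Finsupp.prod_mul]
  refine sum_congr rfl fun a ha => ?_
  have hP : (a.prod fun _ => (P ^ ·)) = P ^ d := by
    rw [Finsupp.prod, prod_pow_eq_pow_sum, hg.degree_eq_sum_deg_support ha]
  rw [hP, mul_left_comm]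

theorem Finset.prod_pow_prod_erase {ι M : Type*} [Fintype ι] [DecidableEq ι] [CommMonoid M]
    (x : ι → M) (a : ι → ℕ) :
    ∏ i, (∏ j ∈ univ.erase i, x j) ^ a i = ∏ i, x i ^ (∑ j, a j - a i) := by
  have hsum : ∀ i, ∑ j, a j - a i = ∑ j ∈ univ.erase i, a j := fun i => by
    rw [← sum_erase_add _ _ (mem_univ i), Nat.add_sub_cancel]
  simp_rw [hsum, ← prod_pow, ← prod_pow_eq_pow_sum]
  exact prod_comm' fun i j => by simp [and_comm, ne_comm]

section Magnus

variable {k : Type*} [CommSemiring k] {N : ℕ}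

theorem aeval_magnus_monomial {e : ℕ} {a : Fin N →₀ ℕ} (ha : a.degree = e) {α : Fin N → ℕ}
    (haα : ∀ i, a i ≤ α i) (hαe : ∀ i, α i ≤ e) (c : k) :
    aeval (magnus k N) (monomial a c) = (∏ i, X i ^ (e - α i)) *
      monomial (Finsupp.equivFunOnFinite.symm fun i => α i - a i) c := by
  rw [aeval_monomial, monomial_eq, Finsupp.prod_fintype _ _ fun _ => pow_zero _,
    Finsupp.prod_fintype _ _ fun _ => pow_zero _]
  simp only [magnus, prod_pow_prod_erase, Finsupp.equivFunOnFinite_symm_apply_apply,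
    ← a.degree_eq_sum, ha, algebraMap_eq]
  rw [mul_left_comm, ← prod_mul_distrib]
  congr 2 with i
  rw [← pow_add, Nat.sub_add_sub_cancel (hαe i) (haα i)]

theorem aeval_magnus_of_isHomogeneous {e : ℕ} {f : MvPolynomial (Fin N) k}
    (hf : f.IsHomogeneous e) {α : Fin N → ℕ}
    (hfα : ∀ a ∈ f.support, ∀ i, a i ≤ α i) (hαe : ∀ i, α i ≤ e) :
    aeval (magnus k N) f = (∏ i, X i ^ (e - α i)) * newtonDualWith α f := by
  conv_lhs => rw [← f.support_sum_monomial_coeff]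
  rw [map_sum, newtonDualWith, mul_sum]
  exact sum_congr rfl fun a ha =>
    aeval_magnus_monomial (hf.degree_eq_sum_deg_support ha).symm (hfα a ha) hαe _

end Magnus

section Directrix

variable {k ι : Type*} [CommSemiring k] [Fintype ι] {N : ℕ}

noncomputable def directrix (f : ι → MvPolynomial (Fin N) k) (i : Fin N) : ℕ :=
  univ.sup fun j => (f j).degreeOf i

theorem le_directrix_of_mem_support {f : ι → MvPolynomial (Fin N) k} {j : ι}
    {a : Fin N →₀ ℕ} (ha : a ∈ (f j).support) (i : Fin N) : a i ≤ directrix f i :=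
  (monomial_le_degreeOf i ha).trans (le_sup (f := fun j => (f j).degreeOf i) (mem_univ j))

theorem directrix_le_of_isHomogeneous {f : ι → MvPolynomial (Fin N) k} {e : ℕ}
    (hf : ∀ j, (f j).IsHomogeneous e) (i : Fin N) : directrix f i ≤ e :=
  Finset.sup_le fun j _ => (degreeOf_le_totalDegree _ i).trans (hf j).totalDegree_le

theorem aeval_magnus_eq_newtonDualWith_directrix {f : ι → MvPolynomial (Fin N) k} {e : ℕ}
    (hf : ∀ j, (f j).IsHomogeneous e) (j : ι) :
    aeval (magnus k N) (f j) =
      (∏ i, X i ^ (e - directrix f i)) * newtonDualWith (directrix f) (f j) :=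
  aeval_magnus_of_isHomogeneous (hf j) (fun _ ha => le_directrix_of_mem_support ha)
    (directrix_le_of_isHomogeneous hf)

end Directrix

theorem eval_newtonDualSet_comp_general {k : Type*} [Field k] {n m d s : ℕ}
    (g : Fin (m + 1) → MvPolynomial (Fin (n + 1)) k)
    (hghom : ∀ j, (g j).IsHomogeneous d)
    (h : Fin (n + 1) → MvPolynomial (Fin (n + 1)) k)
    (hhhom : ∀ ℓ, (h ℓ).IsHomogeneous s)
    (α : Fin (n + 1) → ℕ)
    (hα : ∀ i, α i = Finset.univ.sup fun ℓ => (h ℓ).degreeOf i)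
    (β : Fin (n + 1) → ℕ)
    (hβ : ∀ i, β i = Finset.univ.sup fun j => (aeval h (g j)).degreeOf i) :
    ∀ j, (∏ i, X i ^ (d * s - d * α i)) *
          aeval (fun ℓ => newtonDualWith α (h ℓ)) (g j) =
        (∏ i, X i ^ (d * s - β i)) * newtonDualWith β (aeval h (g j)) := by
  obtain rfl : α = directrix h := funext hα
  obtain rfl : β = directrix fun j => aeval h (g j) := funext hβ
  have hgh (j : Fin (m + 1)) : (aeval h (g j)).IsHomogeneous (d * s) :=
    mul_comm s d ▸ (hghom j).aeval h hhhom
  intro j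
  calc (∏ i, X i ^ (d * s - d * directrix h i)) *
        aeval (fun ℓ => newtonDualWith (directrix h) (h ℓ)) (g j)
      = aeval (fun ℓ => (∏ i, X i ^ (s - directrix h i)) *
          newtonDualWith (directrix h) (h ℓ)) (g j) := by
        rw [aeval_mul_of_isHomogeneous (hghom j), ← prod_pow]
        simp_rw [← pow_mul, Nat.sub_mul, mul_comm]
    _ = aeval (magnus k (n + 1)) (aeval h (g j)) := by
        simp_rw [comp_aeval_apply, aeval_magnus_eq_newtonDualWith_directrix hhhom]
    _ = _ := aeval_magnus_eq_newtonDualWith_directrix hgh j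

theorem eval_newtonDualSet_comp {k : Type*} [Field k] {n m d s : ℕ}
    (hn : 1 ≤ n) (hd : 1 ≤ d) (hs : 1 ≤ s)
    (g : Fin (m + 1) → MvPolynomial (Fin (n + 1)) k)
    (hgne : ∀ j, g j ≠ 0) (hghom : ∀ j, (g j).IsHomogeneous d)
    (h : Fin (n + 1) → MvPolynomial (Fin (n + 1)) k)
    (hhne : ∀ ℓ, h ℓ ≠ 0) (hhhom : ∀ ℓ, (h ℓ).IsHomogeneous s)
    (α : Fin (n + 1) → ℕ)
    (hα : ∀ i, α i = Finset.univ.sup fun ℓ => (h ℓ).degreeOf i)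
    (β : Fin (n + 1) → ℕ)
    (hβ : ∀ i, β i = Finset.univ.sup fun j => (aeval h (g j)).degreeOf i) :
    ∀ j, (∏ i, X i ^ (d * s - d * α i)) *
          aeval (fun ℓ => newtonDualWith α (h ℓ)) (g j) =
        (∏ i, X i ^ (d * s - β i)) * newtonDualWith β (aeval h (g j)) :=
  eval_newtonDualSet_comp_general g hghom h hhhom α hα β hβ
end
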